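/- Let Γ : Set X → Set X be a derivability operator and suppose the binary relation ∝ monotonically orders Γ. Then the structure defined by Γ — the limit 𝔄 of any terminal natural induction of Γ from ∅ that respects ∝ — is a fixpoint of Γ: Γ 𝔄 = 𝔄. Moreover, 𝔄 is a minimal fixpoint of Γ: there is no fixpoint 𝔄' of Γ with 𝔄' ⊊ 𝔄. -/

import Mathlib

universe u

variable {X : Type u}

/-- A natural induction of derivability operator `Γ` from structure `B` of length `β`. -/
def IsNatInd (Γ : Set X → Set X) (B : Set X) (β : Ordinal.{u}) (f : Ordinal.{u} → Set X) : Prop :=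
  f 0 = B ∧
  (∀ α : Ordinal.{u}, α + 1 ≤ β → f α ⊆ f (α + 1) ∧ f (α + 1) \ f α ⊆ Γ (f α)) ∧
  ∀ lam : Ordinal.{u}, lam ≤ β → Order.IsSuccLimit lam → f lam = ⋃ α < lam, f α

/-- `S` is saturated (closed) under `Γ`. -/
def Saturated (Γ : Set X → Set X) (S : Set X) : Prop := Γ S ⊆ S

/-- `S` is saturated on the set `T` of atoms. -/
def SaturatedOn (Γ : Set X → Set X) (S T : Set X) : Prop := Γ S ∩ T ⊆ S

/-- The set of atoms safely derivable from `S`. -/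
def SafeSet (Γ : Set X → Set X) (S : Set X) : Set X :=
  {A | A ∈ Γ S ∧ ∀ (β : Ordinal.{u}) (g : Ordinal.{u} → Set X), IsNatInd Γ S β g → A ∈ Γ (g β)}

/-- The set of atoms strictly underivable from `S`. -/
def UnderivSet (Γ : Set X → Set X) (S : Set X) : Set X :=
  {A | ∀ (β : Ordinal.{u}) (g : Ordinal.{u} → Set X), IsNatInd Γ S β g → A ∉ Γ (g β)}

/-- The structure `T` is safely derivable from the structure `S`. -/
def SafeStep (Γ : Set X → Set X) (S T : Set X) : Prop := S ⊆ T ∧ T ⊆ S ∪ SafeSet Γ S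

/-- A safe natural induction. -/
def IsSafeInd (Γ : Set X → Set X) (B : Set X) (β : Ordinal.{u}) (f : Ordinal.{u} → Set X) : Prop :=
  IsNatInd Γ B β f ∧ ∀ α : Ordinal.{u}, α + 1 ≤ β → SafeStep Γ (f α) (f (α + 1))

/-- A safe-terminal natural induction. -/
def IsSafeTermInd (Γ : Set X → Set X) (B : Set X) (β : Ordinal.{u}) (f : Ordinal.{u} → Set X) : Prop :=
  IsSafeInd Γ B β f ∧ SafeSet Γ (f β) ⊆ f β

/-- `A ≺_∝ B` iff `A ∝ B` and not `B ∝ A`. -/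
def Prec (r : X → X → Prop) (A B : X) : Prop := r A B ∧ ¬ r B A

/-- `r` is a dependency relation of `Γ`. -/
def IsDep (Γ : Set X → Set X) (r : X → X → Prop) : Prop :=
  ∀ (A : X) (S T : Set X), S ∩ {B | r B A} = T ∩ {B | r B A} → (A ∈ Γ S ↔ A ∈ Γ T)

/-- `r` is a monotone dependency relation of `Γ`. -/
def IsMonDep (Γ : Set X → Set X) (r : X → X → Prop) : Prop :=
  ∀ (A : X) (S T : Set X), S ∩ {B | Prec r B A} = T ∩ {B | Prec r B A} →
    S ∩ {B | r B A} ⊆ T ∩ {B | r B A} → A ∈ Γ S → A ∈ Γ T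

/-- `r` monotonically orders `Γ`. -/
def MonOrders (Γ : Set X → Set X) (r : X → X → Prop) : Prop :=
  Transitive r ∧ WellFounded (Prec r) ∧ IsMonDep Γ r

/-- `r` strictly orders `Γ`. -/
def StrictOrders (Γ : Set X → Set X) (r : X → X → Prop) : Prop :=
  Transitive r ∧ Irreflexive r ∧ WellFounded r ∧ IsDep Γ r

/-- The natural induction `f` respects the relation `s`: an atom `A` may be derived at stage `α`
only if `f α` is saturated on `{B | s B A}`. -/
def Respects (Γ : Set X → Set X) (β : Ordinal.{u}) (f : Ordinal.{u} → Set X)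
    (s : X → X → Prop) : Prop :=
  ∀ α : Ordinal.{u}, α + 1 ≤ β → ∀ A ∈ f (α + 1) \ f α, SaturatedOn Γ (f α) {B | s B A}

theorem natInd_mono {Γ : Set X → Set X} {β : Ordinal.{u}} {f : Ordinal.{u} → Set X}
    (hni : IsNatInd Γ ∅ β f) : ∀ δ ≤ β, ∀ α ≤ δ, f α ⊆ f δ := by
  intro δ
  induction δ using Ordinal.induction with
  | h δ IH =>
    intro hδβ α hαδ
    rcases eq_or_lt_of_le hαδ with rfl | hlt
    · exact subset_rfl
    rcases Ordinal.zero_or_succ_or_isSuccLimit δ with h0 | ⟨γ, rfl⟩ | hlim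
    · subst h0; exact absurd hlt (not_lt_zero (a := α))
    · rw [← Ordinal.add_one_eq_succ] at *
      have hγlt : γ < γ + 1 := by
        rw [Ordinal.add_one_eq_succ]; exact Order.lt_succ γ
      have hαγ : α ≤ γ := by
        rw [Ordinal.add_one_eq_succ, Order.lt_succ_iff] at hlt; exact hlt
      exact (IH γ hγlt (le_of_lt (lt_of_lt_of_le hγlt hδβ)) α hαγ).trans
        (hni.2.1 γ hδβ).1
    · rw [hni.2.2 δ hδβ hlim]
      exact fun x hx => Set.mem_iUnion₂.2 ⟨α, hlt, hx⟩

theorem natInd_stage {Γ : Set X → Set X} {β : Ordinal.{u}} {f : Ordinal.{u} → Set X}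
    (hni : IsNatInd Γ ∅ β f) :
    ∀ δ ≤ β, ∀ A ∈ f δ, ∃ α, α + 1 ≤ δ ∧ A ∈ f (α + 1) ∧ A ∉ f α := by
  intro δ
  induction δ using Ordinal.induction with
  | h δ IH =>
    intro hδβ A hA
    rcases Ordinal.zero_or_succ_or_isSuccLimit δ with h0 | ⟨γ, rfl⟩ | hlim
    · subst h0; rw [hni.1] at hA; exact absurd hA (Set.notMem_empty A)
    · rw [← Ordinal.add_one_eq_succ] at *
      have hγlt : γ < γ + 1 := by
        rw [Ordinal.add_one_eq_succ]; exact Order.lt_succ γ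
      by_cases hAγ : A ∈ f γ
      · obtain ⟨α, h1, h2, h3⟩ := IH γ hγlt (le_of_lt (lt_of_lt_of_le hγlt hδβ)) A hAγ
        exact ⟨α, h1.trans hγlt.le, h2, h3⟩
      · exact ⟨γ, le_rfl, hA, hAγ⟩
    · rw [hni.2.2 δ hδβ hlim] at hA
      obtain ⟨ε, hε, hAε⟩ := Set.mem_iUnion₂.1 hA
      obtain ⟨α, h1, h2, h3⟩ := IH ε hε (le_of_lt (lt_of_lt_of_le hε hδβ)) A hAε
      exact ⟨α, h1.trans hε.le, h2, h3⟩

/-- Key lemma: if `A` is derived at stage `α`, every `B ∈ f β` with `B ≺ A` is already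
in `f α`. -/
theorem natInd_key' {Γ : Set X → Set X} {r : X → X → Prop} (htr : Transitive r)
    (hmd : IsMonDep Γ r) {β : Ordinal.{u}} {f : Ordinal.{u} → Set X}
    (hni : IsNatInd Γ ∅ β f) (A : X) (α : Ordinal.{u}) (hα1 : α + 1 ≤ β)
    (hsat : SaturatedOn Γ (f α) {B | Prec r B A}) :
    ∀ γ, γ + 1 ≤ β → ∀ B, B ∈ f (γ + 1) → B ∉ f γ → Prec r B A → B ∈ f α := by
  have hαβ : α ≤ β := le_trans (le_of_lt (by
    rw [Ordinal.add_one_eq_succ]; exact Order.lt_succ α)) hα1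
  intro γ
  induction γ using Ordinal.induction with
  | h γ IH =>
    intro hγ1 B hB1 hB2 hBA
    have hγβ : γ ≤ β := le_trans (le_of_lt (by
      rw [Ordinal.add_one_eq_succ]; exact Order.lt_succ γ)) hγ1
    rcases le_or_gt (γ + 1) α with hle | hlt
    · exact natInd_mono hni α hαβ (γ + 1) hle hB1
    · have hαγ : α ≤ γ := by
        rw [Ordinal.add_one_eq_succ, Order.lt_succ_iff] at hlt; exact hlt
      have hBΓγ : B ∈ Γ (f γ) := (hni.2.1 γ hγ1).2 ⟨hB1, hB2⟩
      have subIH : ∀ C, Prec r C A → C ∈ f γ → C ∈ f α := by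
        intro C hCA hCγ
        obtain ⟨δ, hδ1, hC1, hC2⟩ := natInd_stage hni γ hγβ C hCγ
        have hδγ : δ < γ := lt_of_lt_of_le (by
          rw [Ordinal.add_one_eq_succ]; exact Order.lt_succ δ) hδ1
        exact IH δ hδγ (hδ1.trans hγβ) C hC1 hC2 hCA
      have hBΓα : B ∈ Γ (f α) := by
        refine hmd B (f γ) (f α) ?_ ?_ hBΓγ
        · ext C
          constructor
          · rintro ⟨hCγ, hCB⟩
            have hCA : Prec r C A :=
              ⟨htr hCB.1 hBA.1, fun h => hBA.2 (htr h hCB.1)⟩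
            exact ⟨subIH C hCA hCγ, hCB⟩
          · rintro ⟨hCα, hCB⟩
            exact ⟨natInd_mono hni γ hγβ α hαγ hCα, hCB⟩
        · rintro C ⟨hCγ, hCB⟩
          have hCA : Prec r C A :=
            ⟨htr hCB hBA.1, fun h => hBA.2 (htr h hCB)⟩
          exact ⟨subIH C hCA hCγ, hCB⟩
      exact hsat ⟨hBΓα, hBA⟩

theorem natInd_key {Γ : Set X → Set X} {r : X → X → Prop} (htr : Transitive r)
    (hmd : IsMonDep Γ r) {β : Ordinal.{u}} {f : Ordinal.{u} → Set X}
    (hni : IsNatInd Γ ∅ β f) (hresp : Respects Γ β f (Prec r)) :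
    ∀ A : X, ∀ α, α + 1 ≤ β → A ∈ f (α + 1) → A ∉ f α →
      ∀ B ∈ f β, Prec r B A → B ∈ f α := by
  intro A α hα1 hA1 hA2 B hBβ hBA
  obtain ⟨γ, hγ1, hB1, hB2⟩ := natInd_stage hni β le_rfl B hBβ
  exact natInd_key' htr hmd hni A α hα1 (hresp α hα1 A ⟨hA1, hA2⟩) γ hγ1 B hB1 hB2 hBA

/-- if `r` monotonically orders `Γ`, the limit of any terminal natural induction
from `∅` that respects `r` is a fixpoint of `Γ`, and moreover a minimal fixpoint. -/
theorem stmt18 (Γ : Set X → Set X) (r : X → X → Prop) (hmo : MonOrders Γ r)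
    (β : Ordinal.{u}) (f : Ordinal.{u} → Set X)
    (hni : IsNatInd Γ ∅ β f) (hresp : Respects Γ β f (Prec r)) (hterm : Saturated Γ (f β)) :
    Γ (f β) = f β ∧ ¬ ∃ 𝔄' : Set X, Γ 𝔄' = 𝔄' ∧ 𝔄' ⊂ f β := by
  obtain ⟨htr, hwf, hmd⟩ := hmo
  have key := natInd_key htr hmd hni hresp
  -- step lemma: if A is derived at stage α then A ∈ Γ T for any T with f α ⊆ T ⊆ f β
  have step : ∀ (T : Set X), T ⊆ f β → ∀ α, α + 1 ≤ β → ∀ A, A ∈ f (α + 1) → A ∉ f α →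
      f α ⊆ T → A ∈ Γ T := by
    intro T hTβ α hα1 A hA1 hA2 hαT
    have hαβ : α ≤ β := le_trans (le_of_lt (by
      rw [Ordinal.add_one_eq_succ]; exact Order.lt_succ α)) hα1
    have hAΓα : A ∈ Γ (f α) := (hni.2.1 α hα1).2 ⟨hA1, hA2⟩
    refine hmd A (f α) T ?_ ?_ hAΓα
    · ext C
      constructor
      · rintro ⟨hCα, hCA⟩; exact ⟨hαT hCα, hCA⟩
      · rintro ⟨hCT, hCA⟩
        exact ⟨key A α hα1 hA1 hA2 C (hTβ hCT) hCA, hCA⟩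
    · rintro C ⟨hCα, hCA⟩; exact ⟨hαT hCα, hCA⟩
  have hfix : Γ (f β) = f β := by
    apply Set.Subset.antisymm hterm
    intro A hA
    obtain ⟨α, hα1, hA1, hA2⟩ := natInd_stage hni β le_rfl A hA
    have hαβ : α ≤ β := le_trans (le_of_lt (by
      rw [Ordinal.add_one_eq_succ]; exact Order.lt_succ α)) hα1
    exact step (f β) subset_rfl α hα1 A hA1 hA2 (natInd_mono hni β le_rfl α hαβ)
  refine ⟨hfix, ?_⟩
  rintro ⟨S, hSfix, hSlt⟩
  -- show f β ⊆ S by transfinite induction, contradicting S ⊂ f β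
  have hsub : ∀ δ ≤ β, f δ ⊆ S := by
    intro δ
    induction δ using Ordinal.induction with
    | h δ IH =>
      intro hδβ
      rcases Ordinal.zero_or_succ_or_isSuccLimit δ with h0 | ⟨γ, rfl⟩ | hlim
      · subst h0; rw [hni.1]; exact Set.empty_subset S
      · rw [← Ordinal.add_one_eq_succ] at *
        have hγlt : γ < γ + 1 := by
          rw [Ordinal.add_one_eq_succ]; exact Order.lt_succ γ
        have hγβ : γ ≤ β := le_of_lt (lt_of_lt_of_le hγlt hδβ)
        have hγS : f γ ⊆ S := IH γ hγlt hγβ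
        intro A hA
        by_cases hAγ : A ∈ f γ
        · exact hγS hAγ
        · have : A ∈ Γ S := step S hSlt.1 γ hδβ A hA hAγ hγS
          rw [hSfix] at this; exact this
      · rw [hni.2.2 δ hδβ hlim]
        intro A hA
        obtain ⟨ε, hε, hAε⟩ := Set.mem_iUnion₂.1 hA
        exact IH ε hε (le_of_lt (lt_of_lt_of_le hε hδβ)) hAε
  exact hSlt.2 (hsub β le_rfl)
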